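/- Exponential accuracy of the smoothed disk area: for every s > 0, 0 < ∫_{ℝ²} ½(1 + tanh(s(1 - x² - y²))) dx dy - π ≤ π·e^{-2s}/(2s). In particular, the integral tends to π as s → ∞. -/

import Mathlib

open Real MeasureTheory Filter Set Topology

/-!
Since `(1 + tanh t) / 2 = sigmoid (2 t)`, the integrand is the radial function
`sigmoid (2 s (1 - r²))`. In polar coordinates, `r · sigmoid (a (c - r²))` has the explicit
antiderivative `-log (1 + exp (a (c - r²))) / (2 a)`, so the integral is exactly
`π log (1 + e^{2s}) / (2s) = π + π log (1 + e^{-2s}) / (2s)`, and `0 < log (1 + x) ≤ x` gives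
both bounds.
-/

lemma one_add_tanh_div_two_eq_sigmoid (t : ℝ) : (1 + tanh t) / 2 = sigmoid (2 * t) := by
  rw [sigmoid_def, tanh_eq_sinh_div_cosh, sinh_eq, cosh_eq, exp_neg, exp_neg, two_mul,
    exp_add]
  field_simp
  ring

lemma log_one_add_exp (x : ℝ) : log (1 + exp x) = x + log (1 + exp (-x)) := by
  rw [← log_exp x, ← log_mul (exp_ne_zero x) (by positivity), log_exp, mul_add, mul_one,
    ← exp_add, add_neg_cancel, exp_zero, add_comm]

lemma integral_comp_sq_add_sq (g : ℝ → ℝ) :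
    ∫ p : ℝ × ℝ, g (p.1 ^ 2 + p.2 ^ 2) = 2 * π * ∫ r in Ioi 0, r * g (r ^ 2) := by
  have hnorm (p : ℝ × ℝ) : (polarCoord.symm p).1 ^ 2 + (polarCoord.symm p).2 ^ 2 = p.1 ^ 2 := by
    simp only [polarCoord_symm_apply]
    linear_combination p.1 ^ 2 * sin_sq_add_cos_sq p.2
  calc ∫ p : ℝ × ℝ, g (p.1 ^ 2 + p.2 ^ 2)
      = (∫ r in Ioi 0, r * g (r ^ 2)) * ∫ _ in Ioo (-π) π, (1 : ℝ) := by
        rw [← integral_comp_polarCoord_symm, polarCoord_target, Measure.volume_eq_prod,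
          ← setIntegral_prod_mul]
        simp_rw [hnorm, smul_eq_mul, mul_one]
    _ = 2 * π * ∫ r in Ioi 0, r * g (r ^ 2) := by
        rw [setIntegral_const, volume_real_Ioo_of_le (by linarith [pi_pos]), smul_eq_mul, mul_one]
        ring

lemma integral_Ioi_mul_sigmoid_sub_sq {a : ℝ} (ha : 0 < a) (c : ℝ) :
    ∫ r in Ioi 0, r * sigmoid (a * (c - r ^ 2)) = log (1 + exp (a * c)) / (2 * a) := by
  set H : ℝ → ℝ := fun r => -log (1 + exp (a * (c - r ^ 2))) / (2 * a)
  have hderiv (r : ℝ) : HasDerivAt H (r * sigmoid (a * (c - r ^ 2))) r := by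
    have hu : HasDerivAt (fun r : ℝ => a * (c - r ^ 2)) (a * (0 - 2 * r)) r := by
      simpa using ((hasDerivAt_pow 2 r).const_sub c).const_mul a
    refine (((hu.exp.const_add 1).log (by positivity)).neg.div_const (2 * a)).congr_deriv ?_
    rw [sigmoid_def, exp_neg]
    field_simp
    ring
  have hlim : Tendsto H atTop (𝓝 0) := by
    have hu : Tendsto (fun r : ℝ => a * (c - r ^ 2)) atTop atBot := by
      refine Tendsto.const_mul_atBot ha ?_
      simpa [sub_eq_add_neg] using tendsto_atBot_add_const_left _ c
        (tendsto_neg_atTop_atBot.comp (tendsto_pow_atTop two_ne_zero))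
    simpa [H] using
      ((((tendsto_exp_atBot.comp hu).const_add 1).log (by norm_num)).neg).div_const (2 * a)
  rw [integral_Ioi_of_hasDerivAt_of_nonneg' (fun r _ => hderiv r)
    (fun r hr => mul_nonneg (le_of_lt hr) (sigmoid_nonneg _)) hlim]
  simp only [H]
  ring_nf

lemma integral_sigmoid_mul_sub_sq_add_sq {a : ℝ} (ha : 0 < a) (c : ℝ) :
    ∫ p : ℝ × ℝ, sigmoid (a * (c - (p.1 ^ 2 + p.2 ^ 2))) = π * log (1 + exp (a * c)) / a := by
  rw [integral_comp_sq_add_sq (fun u => sigmoid (a * (c - u))), integral_Ioi_mul_sigmoid_sub_sq ha]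
  field_simp

noncomputable def smoothedDiskArea (s : ℝ) : ℝ :=
  ∫ p : ℝ × ℝ, (1 + tanh (s * (1 - p.1 ^ 2 - p.2 ^ 2))) / 2

lemma smoothedDiskArea_sub_pi {s : ℝ} (hs : 0 < s) :
    smoothedDiskArea s - π = π * log (1 + exp (-2 * s)) / (2 * s) := by
  have hsigmoid (p : ℝ × ℝ) : (1 + tanh (s * (1 - p.1 ^ 2 - p.2 ^ 2))) / 2
      = sigmoid (2 * s * (1 - (p.1 ^ 2 + p.2 ^ 2))) := by
    rw [one_add_tanh_div_two_eq_sigmoid]; ring_nf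
  simp_rw [smoothedDiskArea, hsigmoid,
    integral_sigmoid_mul_sub_sq_add_sq (by positivity : 0 < 2 * s), mul_one,
    log_one_add_exp (2 * s)]
  field_simp
  ring

lemma smoothedDiskArea_sub_pi_pos_and_le {s : ℝ} (hs : 0 < s) :
    0 < smoothedDiskArea s - π ∧ smoothedDiskArea s - π ≤ π * exp (-2 * s) / (2 * s) := by
  rw [smoothedDiskArea_sub_pi hs]
  have hexp := exp_pos (-2 * s)
  have hlog_pos : 0 < log (1 + exp (-2 * s)) := log_pos (by linarith)
  have hlog_le : log (1 + exp (-2 * s)) ≤ exp (-2 * s) := by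
    linarith [log_le_sub_one_of_pos (by linarith : 0 < 1 + exp (-2 * s))]
  exact ⟨by positivity, by gcongr⟩

lemma tendsto_smoothedDiskArea : Tendsto smoothedDiskArea atTop (𝓝 π) := by
  have hbound : Tendsto (fun s => π * exp (-2 * s) / (2 * s)) atTop (𝓝 0) := by
    have hexp : Tendsto (fun s : ℝ => exp (-2 * s)) atTop (𝓝 0) := by
      refine (tendsto_exp_neg_atTop_nhds_zero.comp (tendsto_id.const_mul_atTop two_pos)).congr
        fun s => ?_
      simp [neg_mul]
    simpa using (hexp.const_mul π).div_atTop (tendsto_id.const_mul_atTop two_pos)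
  refine tendsto_of_tendsto_of_tendsto_of_le_of_le' tendsto_const_nhds
    (by simpa only [add_zero] using hbound.const_add π) ?_ ?_
  all_goals filter_upwards [eventually_gt_atTop 0] with s hs
  all_goals linarith [smoothedDiskArea_sub_pi_pos_and_le hs]

/-- **Exponential accuracy of the smoothed disk area.** For every slope `s > 0` the integral
of the smoothed indicator of the unit disk exceeds `π` by at most `π e^{-2s}/(2s)`;
in particular the integral tends to `π` as `s → ∞`. -/
theorem smoothed_disk_area_exponential_accuracy :
    (∀ s : ℝ, 0 < s →
      0 < (∫ p : ℝ × ℝ, (1 + Real.tanh (s * (1 - p.1 ^ 2 - p.2 ^ 2))) / 2) - π ∧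
      (∫ p : ℝ × ℝ, (1 + Real.tanh (s * (1 - p.1 ^ 2 - p.2 ^ 2))) / 2) - π ≤
        π * Real.exp (-2 * s) / (2 * s)) ∧
    Tendsto (fun s : ℝ => ∫ p : ℝ × ℝ, (1 + Real.tanh (s * (1 - p.1 ^ 2 - p.2 ^ 2))) / 2)
      atTop (nhds π) :=
  ⟨fun _ hs => smoothedDiskArea_sub_pi_pos_and_le hs, tendsto_smoothedDiskArea⟩
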